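/- arXiv:2302.11047 — 2 statements merged into one kernel-verified Lean document; each statement's English description precedes it below -/
import Mathlib

section
/- The 6×6 isotropic elasticity matrix E with diagonal blocks E_ii = Em(1-ν)/((1-2ν)(1+ν)) for i=1,2,3, off-diagonal entries E_ij = Em·ν/((1-2ν)(1+ν)) for i≠j, i,j ∈ {1,2,3}, shear diagonal entries E_ii = Em(1/2-ν)/((1-2ν)(1+ν)) for i=4,5,6, and zeros elsewhere, is positive definite whenever Em > 0 and -1 < ν < 1/2. -/
/-!
In terms of the Lamé parameters `λ = Em ν / ((1 - 2ν)(1 + ν))` and `μ = Em / (2(1 + ν))` the matrix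
is the isotropic stiffness matrix with diagonal `λ + 2μ` (normal) and `μ` (shear). Splitting a normal
strain into its volumetric part `(x₀ + x₁ + x₂) / 3` and its deviatoric part, the quadratic form is
`((3λ + 2μ) (x₀ + x₁ + x₂)² + 2μ Σᵢ<ⱼ (xᵢ - xⱼ)²) / 3 + μ (x₃² + x₄² + x₅²)`, so it dominates
`min μ (3λ + 2μ) ‖x‖²`. Both `μ` and `3λ + 2μ = Em / (1 - 2ν)` are positive for `-1 < ν < 1/2`.
-/

open Matrix

theorem Matrix.posDef_of_mul_dotProduct_self_le {n : Type*} [Fintype n] {A : Matrix n n ℝ}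
    (hA : A.IsHermitian) {κ : ℝ} (hκ : 0 < κ) (h : ∀ x, κ * (x ⬝ᵥ x) ≤ x ⬝ᵥ A *ᵥ x) :
    A.PosDef := by
  refine posDef_iff_dotProduct_mulVec.2 ⟨hA, fun x hx => ?_⟩
  have hxx : 0 < x ⬝ᵥ x := by simpa using dotProduct_star_self_pos_iff.2 hx
  simpa using (mul_pos hκ hxx).trans_le (h x)

def isotropicStiffness (lam mu : ℝ) : Matrix (Fin 6) (Fin 6) ℝ :=
  !![lam + 2*mu, lam, lam, 0, 0, 0;
     lam, lam + 2*mu, lam, 0, 0, 0;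
     lam, lam, lam + 2*mu, 0, 0, 0;
     0, 0, 0, mu, 0, 0;
     0, 0, 0, 0, mu, 0;
     0, 0, 0, 0, 0, mu]

namespace isotropicStiffness

theorem isHermitian (lam mu : ℝ) : (isotropicStiffness lam mu).IsHermitian := by
  ext i j
  fin_cases i <;> fin_cases j <;> rfl

theorem three_mul_dotProduct_mulVec (lam mu : ℝ) (x : Fin 6 → ℝ) :
    3 * (x ⬝ᵥ isotropicStiffness lam mu *ᵥ x) =
      (3*lam + 2*mu) * (x 0 + x 1 + x 2)^2
        + 2*mu * ((x 0 - x 1)^2 + (x 1 - x 2)^2 + (x 0 - x 2)^2)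
        + 3*mu * (x 3^2 + x 4^2 + x 5^2) := by
  simp only [isotropicStiffness, dotProduct, mulVec, Fin.sum_univ_six, of_apply, cons_val,
    cons_val_zero, cons_val_one]
  ring

theorem min_mul_dotProduct_self_le (lam : ℝ) {mu : ℝ} (hmu : 0 ≤ mu) (x : Fin 6 → ℝ) :
    min mu (3*lam + 2*mu) * (x ⬝ᵥ x) ≤ x ⬝ᵥ isotropicStiffness lam mu *ᵥ x := by
  set κ := min mu (3*lam + 2*mu)
  have hκμ : κ ≤ mu := min_le_left _ _
  have hκ2μ : κ ≤ 2*mu := by linarith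
  have hκK : κ ≤ 3*lam + 2*mu := min_le_right _ _
  have hxx : 3 * (x ⬝ᵥ x) = (x 0 + x 1 + x 2)^2
      + ((x 0 - x 1)^2 + (x 1 - x 2)^2 + (x 0 - x 2)^2) + 3 * (x 3^2 + x 4^2 + x 5^2) := by
    simp only [dotProduct, Fin.sum_univ_six]
    ring
  suffices 3 * (κ * (x ⬝ᵥ x)) ≤ 3 * (x ⬝ᵥ isotropicStiffness lam mu *ᵥ x) by linarith
  calc 3 * (κ * (x ⬝ᵥ x))
      = κ * (x 0 + x 1 + x 2)^2 + κ * ((x 0 - x 1)^2 + (x 1 - x 2)^2 + (x 0 - x 2)^2)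
        + 3 * κ * (x 3^2 + x 4^2 + x 5^2) := by rw [mul_left_comm, hxx]; ring
    _ ≤ (3*lam + 2*mu) * (x 0 + x 1 + x 2)^2
        + 2*mu * ((x 0 - x 1)^2 + (x 1 - x 2)^2 + (x 0 - x 2)^2)
        + 3*mu * (x 3^2 + x 4^2 + x 5^2) := by gcongr
    _ = 3 * (x ⬝ᵥ isotropicStiffness lam mu *ᵥ x) := (three_mul_dotProduct_mulVec lam mu x).symm

theorem posDef {lam mu : ℝ} (hmu : 0 < mu) (hK : 0 < 3*lam + 2*mu) :
    (isotropicStiffness lam mu).PosDef :=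
  posDef_of_mul_dotProduct_self_le (isHermitian lam mu) (lt_min hmu hK)
    (min_mul_dotProduct_self_le lam hmu.le)

end isotropicStiffness

open Matrix in
theorem elasticity_matrix_posDef (Em ν : ℝ) (hEm : 0 < Em)
    (hν1 : -1 < ν) (hν2 : ν < 1/2) :
    (!![Em*(1-ν)/((1-2*ν)*(1+ν)), Em*ν/((1-2*ν)*(1+ν)), Em*ν/((1-2*ν)*(1+ν)), 0, 0, 0;
       Em*ν/((1-2*ν)*(1+ν)), Em*(1-ν)/((1-2*ν)*(1+ν)), Em*ν/((1-2*ν)*(1+ν)), 0, 0, 0;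
       Em*ν/((1-2*ν)*(1+ν)), Em*ν/((1-2*ν)*(1+ν)), Em*(1-ν)/((1-2*ν)*(1+ν)), 0, 0, 0;
       0, 0, 0, Em*(1/2-ν)/((1-2*ν)*(1+ν)), 0, 0;
       0, 0, 0, 0, Em*(1/2-ν)/((1-2*ν)*(1+ν)), 0;
       0, 0, 0, 0, 0, Em*(1/2-ν)/((1-2*ν)*(1+ν))] : Matrix (Fin 6) (Fin 6) ℝ).PosDef := by
  have h2ν : 0 < 1 - 2*ν := by linarith
  have hν : 0 < 1 + ν := by linarith
  have hnormal : Em*(1-ν)/((1-2*ν)*(1+ν)) = Em*ν/((1-2*ν)*(1+ν)) + 2 * (Em/(2*(1+ν))) := by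
    rw [mul_div_assoc', mul_div_mul_left _ _ two_ne_zero,
      div_add_div _ _ (by positivity) (by positivity), div_eq_div_iff (by positivity) (by positivity)]
    ring
  have hshear : Em*(1/2-ν)/((1-2*ν)*(1+ν)) = Em/(2*(1+ν)) := by
    rw [div_eq_div_iff (by positivity) (by positivity)]
    ring
  have hbulk : 3 * (Em*ν/((1-2*ν)*(1+ν))) + 2 * (Em/(2*(1+ν))) = Em/(1-2*ν) := by
    rw [mul_div_assoc', mul_div_assoc', mul_div_mul_left _ _ two_ne_zero,
      div_add_div _ _ (by positivity) (by positivity), div_eq_div_iff (by positivity) (by positivity)]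
    ring
  rw [hnormal, hshear]
  exact isotropicStiffness.posDef (by positivity) (by rw [hbulk]; positivity)
end

section
/- For a, c > 0 and ν ∈ (0, 1/2), the energy ratio r(a,c,ν) = (a²(ν-1) - 32c²)/(32c²(ν²-1)) satisfies r(a,c,ν) > 1. -/
theorem energy_ratio_gt_one (a c ν : ℝ) (ha : 0 < a) (hc : 0 < c)
    (hν1 : 0 < ν) (hν2 : ν < 1/2) :
    (a^2*(ν - 1) - 32*c^2)/(32*c^2*(ν^2 - 1)) > 1 := by
  have hden : 32*c^2*(ν^2 - 1) < 0 := by 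
    have h1 : ν^2 < 1 := by nlinarith
    have h2 : (0:ℝ) < 32*c^2 := by positivity
    nlinarith
  rw [gt_iff_lt, lt_div_iff_of_neg hden]
  nlinarith [sq_nonneg a, sq_nonneg c, mul_pos (mul_pos hc hc) (mul_pos hν1 hν1)]
end
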